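/- For any prime p, positive integer a, and natural number n, the Bell polynomials satisfy the Gertsch–Robert congruence B_{p^a + n}(x) ≡ B_{n+1}(x) + B_n(x)·∑_{r=1}^{a} x^{p^r} modulo p·Z_p[x]. -/

import Mathlib

/-- Stirling numbers of the second kind. -/
def stirling2 : ℕ → ℕ → ℕ
  | 0, 0 => 1
  | 0, _ + 1 => 0
  | _ + 1, 0 => 0
  | n + 1, k + 1 => (k + 1) * stirling2 n (k + 1) + stirling2 n k

/-- The Bell polynomial `B_n(x) = ∑_{k=0}^n S(n,k) x^k`. -/
noncomputable def bellPoly (R : Type*) [CommRing R] (n : ℕ) : Polynomial R :=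
  ∑ k ∈ Finset.range (n + 1), Polynomial.C (stirling2 n k : R) * Polynomial.X ^ k

/-!
With `T = X (1 + d/dX)` one has `B_{n+1} = T B_n`, so `B_m = T^m 1`. Since
`T (X^k f) = X^k (T + k) f`, the falling factorial `X (X - 1) ⋯ (X - k + 1)` evaluated at `T`
sends `1` to `X^k`; in characteristic `p` that falling factorial for `k = p` is `X^p - X`, whence
`B_p = X^p + X`. Pushing `T^p` past `X^k` with Fermat's little theorem upgrades this to the
operator identity `T^p = T + X^p`. Multiplication by `X^p` commutes with `T` in characteristic
`p`, so Frobenius gives `T^(p^a) = T + ∑_{r=1}^a X^(p^r)`; apply it to `B_n` and lift from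
`𝔽_p` to `ℤ_p`.
-/

open Polynomial Finset

theorem stirling2_eq_stirlingSecond : stirling2 = Nat.stirlingSecond := by
  funext n k
  induction n generalizing k with
  | zero => cases k <;> rfl
  | succ n ih => cases k <;> simp [stirling2, Nat.stirlingSecond_succ_succ, ih]

section CommRing

variable (R : Type*) [CommRing R]

theorem coeff_bellPoly (n k : ℕ) : (bellPoly R n).coeff k = stirling2 n k := by
  simp only [bellPoly, finsetSum_coeff, coeff_C_mul, coeff_X_pow, mul_ite, mul_one, mul_zero,
    sum_ite_eq, mem_range]
  split_ifs with h
  · rfl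
  · rw [stirling2_eq_stirlingSecond, Nat.stirlingSecond_eq_zero_of_lt (by omega), Nat.cast_zero]

theorem bellPoly_map {S : Type*} [CommRing S] (f : R →+* S) (n : ℕ) :
    (bellPoly R n).map f = bellPoly S n := by
  simp [bellPoly, Polynomial.map_sum]

theorem bellPoly_zero : bellPoly R 0 = 1 := by
  simp [bellPoly, stirling2]

noncomputable def bellOp : Module.End R R[X] :=
  LinearMap.mulLeft R X ∘ₗ (LinearMap.id + derivative)

variable {R}

theorem bellOp_apply (f : R[X]) : bellOp R f = X * (f + derivative f) := rfl

theorem bellOp_one : bellOp R 1 = X := by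
  simp [bellOp_apply]

theorem bellOp_bellPoly (n : ℕ) : bellOp R (bellPoly R n) = bellPoly R (n + 1) := by
  ext (_ | k)
  · simp [bellOp_apply, coeff_bellPoly, stirling2]
  · rw [bellOp_apply, coeff_X_mul, coeff_add, coeff_derivative, coeff_bellPoly, coeff_bellPoly,
      coeff_bellPoly, stirling2]
    push_cast
    ring

theorem bellOp_pow_bellPoly (m n : ℕ) : (bellOp R ^ m) (bellPoly R n) = bellPoly R (n + m) := by
  induction m generalizing n with
  | zero => rfl
  | succ m ih => rw [pow_succ, Module.End.mul_apply, bellOp_bellPoly, ih, add_assoc, add_comm 1]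

theorem bellOp_X_pow_mul (k : ℕ) (f : R[X]) :
    bellOp R (X ^ k * f) = X ^ k * (bellOp R f + (k : R[X]) * f) := by
  rcases k with _ | k
  · simp
  · simp only [bellOp_apply, derivative_mul, derivative_X_pow, C_eq_natCast]
    push_cast
    ring

theorem bellOp_X_pow (k : ℕ) : bellOp R (X ^ k) = X ^ (k + 1) + (k : R[X]) * X ^ k := by
  simpa [bellOp_one, pow_succ, add_mul, mul_comm] using bellOp_X_pow_mul k (1 : R[X])

theorem bellOp_pow_X_pow_mul (m k : ℕ) (f : R[X]) :
    (bellOp R ^ m) (X ^ k * f) = X ^ k * ((bellOp R + (k : Module.End R R[X])) ^ m) f := by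
  have h : SemiconjBy (LinearMap.mulLeft R (X ^ k)) (bellOp R + (k : Module.End R R[X]))
      (bellOp R) :=
    LinearMap.ext fun g => by simp [bellOp_X_pow_mul k g, nsmul_eq_mul]
  exact (LinearMap.congr_fun (h.pow_right m) f).symm

theorem aeval_bellOp_descPochhammer (k : ℕ) :
    aeval (bellOp R) (descPochhammer R k) 1 = X ^ k := by
  induction k with
  | zero => simp
  | succ k ih =>
    rw [descPochhammer_succ_right, mul_comm, map_mul, Module.End.mul_apply, ih, map_sub, aeval_X,
      map_natCast, LinearMap.sub_apply, bellOp_X_pow, Module.End.natCast_apply, nsmul_eq_mul,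
      add_sub_cancel_right]

end CommRing

section CharP

variable (p : ℕ) {R : Type*} [CommRing R] [CharP R p]

theorem charP_polynomial_end : CharP (Module.End R R[X]) p :=
  charP_of_injective_algebraMap (R := R)
    (fun r s h => C_injective (by simpa [smul_eq_C_mul] using LinearMap.congr_fun h 1)) p

attribute [local instance] charP_polynomial_end

theorem commute_bellOp_mulLeft_X_pow :
    Commute (bellOp R) (LinearMap.mulLeft R (X ^ p)) :=
  LinearMap.ext fun f => by simp [bellOp_X_pow_mul]

variable [hp : Fact p.Prime]

theorem natCast_pow_char {A : Type*} [Ring A] [CharP A p] (k : ℕ) : (k : A) ^ p = k := by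
  rw [← map_natCast (ZMod.castHom (dvd_refl p) A), ← map_pow, ZMod.pow_card]

theorem ZMod.descPochhammer_eq_X_pow_sub_X : descPochhammer (ZMod p) p = X ^ p - X := by
  have hdeg : (X ^ p - X : (ZMod p)[X]).natDegree = p :=
    FiniteField.X_pow_card_sub_X_natDegree_eq _ hp.out.one_lt
  have hmonic : (X ^ p - X : (ZMod p)[X]).Monic :=
    monic_X_pow_sub (degree_X.trans_lt (by exact_mod_cast hp.out.one_lt))
  refine eq_of_degree_le_of_eval_finset_eq univ ?_ ?_ ?_ ?_
  · rw [degree_eq_natDegree (monic_descPochhammer _ p).ne_zero, descPochhammer_natDegree,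
      card_univ, ZMod.card]
  · rw [degree_eq_natDegree (monic_descPochhammer _ p).ne_zero, descPochhammer_natDegree,
      degree_eq_natDegree hmonic.ne_zero, hdeg]
  · rw [(monic_descPochhammer _ p).leadingCoeff, hmonic.leadingCoeff]
  · intro x _
    rw [descPochhammer_eval_eq_prod_range, eval_sub, eval_pow, eval_X, ZMod.pow_card, sub_self]
    exact prod_eq_zero (mem_range.mpr x.val_lt) (by rw [ZMod.natCast_zmod_val, sub_self])

theorem descPochhammer_eq_X_pow_sub_X : descPochhammer R p = X ^ p - X := by
  rw [← descPochhammer_map (ZMod.castHom (dvd_refl p) R), ZMod.descPochhammer_eq_X_pow_sub_X]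
  simp

theorem bellPoly_char : bellPoly R p = X ^ p + X :=
  calc bellPoly R p = aeval (bellOp R) (X ^ p : R[X]) 1 := by
        rw [aeval_X_pow, ← bellPoly_zero R, bellOp_pow_bellPoly, zero_add]
    _ = aeval (bellOp R) (descPochhammer R p + X) 1 := by
        rw [descPochhammer_eq_X_pow_sub_X, sub_add_cancel]
    _ = X ^ p + X := by
        rw [map_add, LinearMap.add_apply, aeval_bellOp_descPochhammer, aeval_X, bellOp_one]

theorem bellOp_pow_char : bellOp R ^ p = bellOp R + LinearMap.mulLeft R (X ^ p) := by
  have hB : (bellOp R ^ p) 1 = X ^ p + X := by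
    rw [← bellPoly_zero R, bellOp_pow_bellPoly, zero_add, bellPoly_char]
  refine lhom_ext' fun k => LinearMap.ext_ring ?_
  rw [LinearMap.comp_apply, LinearMap.comp_apply, monomial_one_right_eq_X_pow, ← mul_one (X ^ k),
    bellOp_pow_X_pow_mul, add_pow_char_of_commute _ (Nat.cast_commute _ _).symm,
    natCast_pow_char, LinearMap.add_apply, hB, LinearMap.add_apply, bellOp_X_pow_mul, bellOp_one,
    LinearMap.mulLeft_apply, Module.End.natCast_apply, nsmul_eq_mul]
  ring

theorem bellOp_pow_char_pow (a : ℕ) :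
    bellOp R ^ p ^ a = bellOp R + LinearMap.mulLeft R (∑ r ∈ Icc 1 a, X ^ p ^ r) := by
  induction a with
  | zero => simp
  | succ a ih =>
    rw [pow_succ', pow_mul, bellOp_pow_char,
      add_pow_char_pow_of_commute _ _ (commute_bellOp_mulLeft_X_pow p), ih]
    refine LinearMap.ext fun f => ?_
    simp [sum_Icc_succ_top, ← pow_mul, ← pow_succ', add_mul, add_assoc]

theorem bellPoly_char_pow_add (a n : ℕ) :
    bellPoly R (p ^ a + n) = bellPoly R (n + 1) + bellPoly R n * ∑ r ∈ Icc 1 a, X ^ p ^ r := by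
  rw [add_comm, ← bellOp_pow_bellPoly, bellOp_pow_char_pow, LinearMap.add_apply, bellOp_bellPoly,
    LinearMap.mulLeft_apply, mul_comm]

end CharP

theorem PadicInt.natCast_dvd_iff_map_toZMod_eq_zero (p : ℕ) [Fact p.Prime] (f : ℤ_[p][X]) :
    (p : ℤ_[p][X]) ∣ f ↔ f.map PadicInt.toZMod = 0 := by
  rw [← coe_mapRingHom, ← RingHom.mem_ker, ker_mapRingHom, PadicInt.ker_toZMod,
    PadicInt.maximalIdeal_eq_span_p, Ideal.map_span, Set.image_singleton, Ideal.mem_span_singleton,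
    map_natCast]

open Polynomial in
theorem bellPoly_gertsch_robert_general (p : ℕ) [Fact p.Prime] (a : ℕ) (n : ℕ) :
    (p : Polynomial ℤ_[p]) ∣
      bellPoly ℤ_[p] (p ^ a + n) -
        (bellPoly ℤ_[p] (n + 1) + bellPoly ℤ_[p] n * ∑ r ∈ Finset.Icc 1 a, X ^ (p ^ r)) := by
  rw [PadicInt.natCast_dvd_iff_map_toZMod_eq_zero, Polynomial.map_sub, sub_eq_zero]
  simp only [Polynomial.map_add, Polynomial.map_mul, Polynomial.map_sum, Polynomial.map_pow,
    map_X, bellPoly_map]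
  exact bellPoly_char_pow_add p a n

open Polynomial in
/-- Gertsch–Robert congruence: `B_{p^a+n}(x) ≡ B_{n+1}(x) + B_n(x)·∑_{r=1}^a x^{p^r}`
mod `p·ℤ_p[x]`. -/
theorem bellPoly_gertsch_robert (p : ℕ) [Fact p.Prime] (a : ℕ) (ha : 0 < a) (n : ℕ) :
    (p : Polynomial ℤ_[p]) ∣
      bellPoly ℤ_[p] (p ^ a + n) -
        (bellPoly ℤ_[p] (n + 1) + bellPoly ℤ_[p] n * ∑ r ∈ Finset.Icc 1 a, X ^ (p ^ r)) :=
  bellPoly_gertsch_robert_general p a n
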